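/- arXiv:1908.00760 — 3 statements merged into one kernel-verified Lean document; each statement's English description precedes it below -/
import Mathlib

section
/- There are no integers q0 ≥ 3, g ∈ {2,4}, λ ≥ 1 and n ∈ {1,2} satisfying n·λ·(q0^g - 2) = (q0-2)(q0^2-q0-1)(q0^2-q0-3). -/
/-!
The equation makes `q0 ^ g - 2` a divisor of `(q0 - 2) (q0² - q0 - 1) (q0² - q0 - 3)`, so it divides
the remainder of that polynomial modulo `q0 ^ g - 2`. This remainder is `q0 - 2` for `g = 2` and
`q0³ + 10 q0² - 3 q0 - 14` for `g = 4`; for `q0 ≥ 3` (resp. `q0 ≥ 4`) it is positive and smaller than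
the divisor, which is impossible. The case `g = 4`, `q0 = 3` is `¬ 79 ∣ 15`.
-/

lemma Int.not_dvd_of_pos_of_lt {a b : ℤ} (ha : 0 < a) (hab : a < b) : ¬ b ∣ a :=
  fun h => ha.ne' (Int.eq_zero_of_dvd_of_nonneg_of_lt ha.le hab h)

lemma sq_sub_two_not_dvd {q : ℤ} (hq : 3 ≤ q) :
    ¬ (q ^ 2 - 2) ∣ (q - 2) * (q ^ 2 - q - 1) * (q ^ 2 - q - 3) := by
  have hdiv : (q - 2) * (q ^ 2 - q - 1) * (q ^ 2 - q - 3)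
      = (q ^ 2 - 2) * (q ^ 3 - 4 * q ^ 2 + 3 * q + 2) + (q - 2) := by ring
  rw [hdiv, dvd_add_right (dvd_mul_right _ _)]
  exact Int.not_dvd_of_pos_of_lt (by omega) (by nlinarith)

lemma pow_four_sub_two_not_dvd {q : ℤ} (hq : 3 ≤ q) :
    ¬ (q ^ 4 - 2) ∣ (q - 2) * (q ^ 2 - q - 1) * (q ^ 2 - q - 3) := by
  obtain rfl | hq4 := hq.eq_or_lt
  · norm_num
  have hdiv : (q - 2) * (q ^ 2 - q - 1) * (q ^ 2 - q - 3)
      = (q ^ 4 - 2) * (q - 4) + (q ^ 3 + 10 * q ^ 2 - 3 * q - 14) := by ring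
  rw [hdiv, dvd_add_right (dvd_mul_right _ _)]
  have hq_sq : 12 ≤ q ^ 2 - q := by nlinarith
  refine Int.not_dvd_of_pos_of_lt (by nlinarith) ?_
  nlinarith [mul_le_mul_of_nonneg_left hq_sq (sq_nonneg q)]

theorem stmt_11 :
    ¬ ∃ (q0 l n : ℤ) (g : ℕ), 3 ≤ q0 ∧ (g = 2 ∨ g = 4) ∧ 1 ≤ l ∧ (n = 1 ∨ n = 2) ∧
      n * l * (q0 ^ g - 2) = (q0 - 2) * (q0 ^ 2 - q0 - 1) * (q0 ^ 2 - q0 - 3) := by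
  rintro ⟨q0, l, n, g, hq, rfl | rfl, -, -, heq⟩
  · exact sq_sub_two_not_dvd hq (Dvd.intro_left _ heq)
  · exact pow_four_sub_two_not_dvd hq (Dvd.intro_left _ heq)
end

section
/- For an integer q0 ≥ 2, q0^3 - 2 divides (q0^3-q0-1)(q0^3-q0-2)(q0^3-q0-3) if and only if q0 = 2. -/
/-!
Modulo `q ^ 3 - 2` we have `q ^ 3 ≡ 2`, so the three factors reduce to `1 - q`, `-q`, `-1 - q`, and
their product to `q - (q ^ 3 - 2) - 2 ≡ q - 2`. Hence the divisibility amounts to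
`q ^ 3 - 2 ∣ q - 2`, and for `q ≥ 2` the bound `0 ≤ q - 2 < q ^ 3 - 2` forces `q = 2`.
-/

theorem prod_modEq_sub_two (q : ℤ) :
    (q ^ 3 - q - 1) * (q ^ 3 - q - 2) * (q ^ 3 - q - 3) ≡ q - 2 [ZMOD q ^ 3 - 2] :=
  Int.modEq_iff_dvd.mpr ⟨-(q ^ 6 - 3 * q ^ 4 - 4 * q ^ 3 + 3 * q ^ 2 + 6 * q + 2), by ring⟩

theorem cube_sub_two_dvd_sub_two_iff {q : ℤ} (h : 2 ≤ q) : q ^ 3 - 2 ∣ q - 2 ↔ q = 2 := by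
  refine ⟨fun hdvd => ?_, fun hq => hq ▸ by norm_num⟩
  have hlt : |q - 2| < q ^ 3 - 2 := by
    have hsq : 4 ≤ q ^ 2 := by nlinarith
    rw [abs_of_nonneg (by omega)]
    nlinarith
  linarith [Int.eq_zero_of_abs_lt_dvd hdvd hlt]

theorem stmt_16 (q0 : ℤ) (h : 2 ≤ q0) :
    (q0 ^ 3 - 2 ∣ (q0 ^ 3 - q0 - 1) * (q0 ^ 3 - q0 - 2) * (q0 ^ 3 - q0 - 3)) ↔
      q0 = 2 := by
  rw [← cube_sub_two_dvd_sub_two_iff h, ← Int.modEq_zero_iff_dvd, ← Int.modEq_zero_iff_dvd]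
  exact ⟨(prod_modEq_sub_two q0).symm.trans, (prod_modEq_sub_two q0).trans⟩
end

section
/- There are no integers f ≥ 1 and c ≥ 4 satisfying 6·(2^f - 2) = (c-1)(c-2)(c-3). -/
/-!
With `k = f - 1` the equation reads `(c - 1)(c - 2)(c - 3) = 12 (2^k - 1)`; for `k ≥ 5` it
forces `c ≡ 78 (mod 128)`. Adding `24`, resp. `60`, to both sides factors it as
`(c + 1)(c² - 7c + 18) = 12 (2^k + 1)` and `(c + 2)(c² - 8c + 27) = 48 (2^(k-2) + 1)`.
If `k` is odd or divisible by `4`, then `-2` is a square modulo every odd prime dividing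
`3 (2^k + 1)`, so every odd divisor of it is `1` or `3` mod `8`; yet `c + 1 ≡ 7 (mod 8)` divides
it. If `k ≡ 2 (mod 4)`, the same applies to `(c + 2) / 16 ≡ 5 (mod 8)` and `3 (2^(k-2) + 1)`.
Small `k` are checked directly.
-/

def oneThreeModEight : Submonoid ℕ where
  carrier := {n | n % 8 = 1 ∨ n % 8 = 3}
  one_mem' := Or.inl rfl
  mul_mem' := by
    rintro a b (ha | ha) (hb | hb) <;> simp [Nat.mul_mod, ha, hb]

lemma mem_oneThreeModEight {n : ℕ} : n ∈ oneThreeModEight ↔ n % 8 = 1 ∨ n % 8 = 3 := Iff.rfl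

lemma Submonoid.mem_of_forall_mem_primeFactorsList {S : Submonoid ℕ} {n : ℕ} (hn : n ≠ 0)
    (h : ∀ p ∈ n.primeFactorsList, p ∈ S) : n ∈ S :=
  Nat.prod_primeFactorsList hn ▸ S.list_prod_mem h

lemma isSquare_neg_two_of_two_pow_eq_neg_one {R : Type*} [CommRing R] {k : ℕ}
    (hk : Odd k ∨ 4 ∣ k) (h : (2 : R) ^ k = -1) : IsSquare (-2 : R) := by
  rcases hk with ⟨j, rfl⟩ | ⟨j, rfl⟩
  · exact ⟨2 ^ (j + 1), by linear_combination (-2) * h⟩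
  · -- `y = 2 ^ j` has `y⁴ = -1`, so `y⁻¹ = y⁷` and `(y - y⁻¹)² = y⁻² (y⁴ + 1) - 2 = -2`.
    have hy : ((2 : R) ^ j) ^ 4 = -1 := by rw [← pow_mul, mul_comm, h]
    exact ⟨2 ^ j - (2 ^ j) ^ 7, by
      linear_combination (-(2 ^ j) ^ 10 + (2 ^ j) ^ 6 + 2 * (2 ^ j) ^ 4 - (2 ^ j) ^ 2 - 2) * hy⟩

lemma mem_oneThreeModEight_of_prime_dvd {p k : ℕ} (hp : p.Prime) (hp2 : p ≠ 2)
    (hk : Odd k ∨ 4 ∣ k) (h : p ∣ 3 * (2 ^ k + 1)) : p ∈ oneThreeModEight := by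
  rcases (Nat.Prime.dvd_mul hp).mp h with h3 | hpow
  · rw [(Nat.prime_dvd_prime_iff_eq hp Nat.prime_three).mp h3]
    exact Or.inr rfl
  · have : Fact p.Prime := ⟨hp⟩
    have h2 : (2 : ZMod p) ^ k = -1 := by
      have hzero := (ZMod.natCast_eq_zero_iff _ p).mpr hpow
      push_cast at hzero
      linear_combination hzero
    exact (ZMod.exists_sq_eq_neg_two_iff hp2).mp (isSquare_neg_two_of_two_pow_eq_neg_one hk h2)

lemma mem_oneThreeModEight_of_dvd {n k : ℕ} (hn : Odd n) (hk : Odd k ∨ 4 ∣ k)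
    (h : n ∣ 3 * (2 ^ k + 1)) : n ∈ oneThreeModEight := by
  refine Submonoid.mem_of_forall_mem_primeFactorsList hn.pos.ne' fun p hp ↦ ?_
  have hpn := Nat.dvd_of_mem_primeFactorsList hp
  have hp2 : p ≠ 2 := by
    rintro rfl
    exact Nat.not_even_iff_odd.mpr hn (even_iff_two_dvd.mpr hpn)
  exact mem_oneThreeModEight_of_prime_dvd (Nat.prime_of_mem_primeFactorsList hp) hp2 hk (hpn.trans h)

lemma emod_128_eq_of_cubic {c : ℤ} {k : ℕ} (hk : 5 ≤ k)
    (h : (c - 1) * (c - 2) * (c - 3) = 12 * (2 ^ k - 1)) : c % 128 = 78 := by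
  have hcast := congrArg (Int.cast : ℤ → ZMod 128) h
  obtain ⟨j, rfl⟩ := Nat.exists_eq_add_of_le' hk
  have h0 : (12 : ZMod 128) * 2 ^ (j + 5) = 0 := by
    rw [pow_add, mul_left_comm]
    exact mul_eq_zero_of_right _ (by decide)
  have hroot : ∀ x : ZMod 128, (x - 1) * (x - 2) * (x - 3) = -12 → x = 78 := by
    decide +kernel
  have := hroot c (by push_cast at hcast; linear_combination hcast + h0)
  exact (ZMod.intCast_eq_intCast_iff' c 78 128).mp (by exact_mod_cast this)

lemma cubic_ne_of_lt_five {c k : ℕ} (hc : 4 ≤ c) (hk : k < 5) :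
    ((c : ℤ) - 1) * (c - 2) * (c - 3) ≠ 12 * (2 ^ k - 1) := by
  intro h
  have hc8 : c ≤ 8 := by
    by_contra! hc9
    have : (2 : ℤ) ^ k ≤ 2 ^ 4 := pow_le_pow_right₀ one_le_two (by omega)
    have : (8 : ℤ) * 7 * 6 ≤ (c - 1) * (c - 2) * (c - 3) := by gcongr <;> nlinarith
    linarith
  interval_cases c <;> interval_cases k <;> norm_num at h

lemma add_one_dvd_of_cubic {c k : ℕ} (hc : c % 2 = 0)
    (h : ((c : ℤ) - 1) * (c - 2) * (c - 3) = 12 * (2 ^ k - 1)) : c + 1 ∣ 3 * (2 ^ k + 1) := by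
  have hcop : Nat.Coprime (c + 1) 4 :=
    Nat.Coprime.pow_right 2 (Nat.coprime_two_right.mpr (Nat.odd_iff.mpr (by omega)))
  refine hcop.dvd_of_dvd_mul_right (Int.natCast_dvd_natCast.mp ⟨(c : ℤ) ^ 2 - 7 * c + 18, ?_⟩)
  push_cast
  -- `(c + 1) (c² - 7c + 18) = (c - 1) (c - 2) (c - 3) + 24`
  linear_combination -h

lemma dvd_of_cubic_of_add_two_eq {c j m : ℕ} (hm : c + 2 = 16 * m)
    (h : ((c : ℤ) - 1) * (c - 2) * (c - 3) = 12 * (2 ^ (j + 2) - 1)) : m ∣ 3 * (2 ^ j + 1) := by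
  rw [← Int.natCast_dvd_natCast]
  refine ⟨(c : ℤ) ^ 2 - 8 * c + 27, mul_left_cancel₀ (by norm_num : (16 : ℤ) ≠ 0) ?_⟩
  have hm' : (c : ℤ) + 2 = 16 * m := by exact_mod_cast hm
  push_cast
  -- `(c + 2) (c² - 8c + 27) = (c - 1) (c - 2) (c - 3) + 60`
  linear_combination -h + ((c : ℤ) ^ 2 - 8 * c + 27) * hm'

theorem stmt_19 :
    ¬ ∃ (f : ℕ) (c : ℤ), 1 ≤ f ∧ 4 ≤ c ∧
      6 * ((2 : ℤ) ^ f - 2) = (c - 1) * (c - 2) * (c - 3) := by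
  rintro ⟨f, c, hf, hc, heq⟩
  obtain ⟨k, rfl⟩ := Nat.exists_eq_add_of_le' hf
  lift c to ℕ using by omega
  have hcubic : ((c : ℤ) - 1) * (c - 2) * (c - 3) = 12 * (2 ^ k - 1) := by
    linear_combination -heq
  rcases lt_or_ge k 5 with hk | hk
  · exact cubic_ne_of_lt_five (by exact_mod_cast hc) hk hcubic
  have h78 := emod_128_eq_of_cubic hk hcubic
  rcases (by omega : k % 4 = 2 ∨ k % 2 = 1 ∨ k % 4 = 0) with hk2 | hk
  · obtain ⟨j, rfl⟩ : ∃ j, k = j + 2 := ⟨k - 2, by omega⟩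
    obtain ⟨m, hm⟩ : ∃ m, c + 2 = 16 * m := ⟨(c + 2) / 16, by omega⟩
    have hm8 := mem_oneThreeModEight.mp <| mem_oneThreeModEight_of_dvd
      (Nat.odd_iff.mpr (by omega)) (Or.inr (by omega)) (dvd_of_cubic_of_add_two_eq hm hcubic)
    omega
  · have hc8 := mem_oneThreeModEight.mp <| mem_oneThreeModEight_of_dvd
      (Nat.odd_iff.mpr (by omega)) (hk.imp Nat.odd_iff.mpr Nat.dvd_of_mod_eq_zero)
      (add_one_dvd_of_cubic (by omega) hcubic)
    omega
end
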